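/- Let (V_1,...,V_n) be an n-tuple of doubly non-commuting isometries on a complex Hilbert space H, let i_1,...,i_l be l distinct indices in {1,...,n}, and let k_{i_1},...,k_{i_l} ≥ 0. Then: (1) the product (V_{i_1}^{k_{i_1}}(1 − V_{i_1}V_{i_1}*)V_{i_1}^{*k_{i_1}}) ⋯ (V_{i_l}^{k_{i_l}}(1 − V_{i_l}V_{i_l}*)V_{i_l}^{*k_{i_l}}) equals (V_{i_1}^{k_{i_1}} ⋯ V_{i_l}^{k_{i_l}}) · [(1 − V_{i_1}V_{i_1}*) ⋯ (1 − V_{i_l}V_{i_l}*)] · (V_{i_l}^{*k_{i_l}} ⋯ V_{i_1}^{*k_{i_1}}); and (2) (V_{i_1}^{k_{i_1}}V_{i_1}^{*k_{i_1}}) ⋯ (V_{i_l}^{k_{i_l}}V_{i_l}^{*k_{i_l}}) = (V_{i_1}^{k_{i_1}} ⋯ V_{i_l}^{k_{i_l}}) · (V_{i_l}^{*k_{i_l}} ⋯ V_{i_1}^{*k_{i_1}}). -/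

import Mathlib

/-!
Both identities are instances of a monoid fact: `∏ (v r * p r * w r)` equals
`(∏ v r) * (∏ p r) * (∏ w r)`, the last product taken in reverse order, as soon as each `w r`
commutes with every later factor `v s * p s * w s` and each `p r` with every later `v s` (for the
second identity `p = 1`).

For `i ≠ j`, `(V i)*` passes `V j` and `(V j)*` at the cost of the scalars `conj (z i j)` and
`z i j`, whose product is `1`; hence `(V i)*` commutes with `V j ^ m * C * (V j)* ^ m` whenever it
commutes with `C`. Symmetrically `V j` commutes with `V i * (V i)*`, which needs
`V i * V j = z i j • (V j * V i)`. That relation is not among the defining ones, but `V i * V j`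
and `V j * V i` are isometries with `(V j * V i)* * (V i * V j) = z i j`, and in a C*-algebra two
isometries with `b* a = c`, `‖c‖ = 1`, satisfy `a = c • b`.
-/

open ContinuousLinearMap

variable {H : Type*} [NormedAddCommGroup H] [InnerProductSpace ℂ H] [CompleteSpace H]

/-- `(V 1, ..., V n)` is an `n`-tuple of doubly non-commuting isometries with structure
constants `z i j`: each `V i` is an isometry (`(V i)* (V i) = 1`) and
`(V i)* (V j) = conj (z i j) • (V j) (V i)*` for all `i ≠ j`. -/
def DoublyNonCommuting {n : ℕ} (z : Fin n → Fin n → ℂ) (V : Fin n → H →L[ℂ] H) : Prop :=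
  (∀ i, adjoint (V i) * V i = 1) ∧
    ∀ i j, i ≠ j →
      adjoint (V i) * V j = (starRingEnd ℂ) (z i j) • (V j * adjoint (V i))

theorem List.prod_ofFn_mul_mul_of_commute {M : Type*} [Monoid M] {l : ℕ} (v p w : Fin l → M)
    (hw : ∀ r s, r < s → Commute (w r) (v s * p s * w s))
    (hp : ∀ r s, r < s → Commute (p r) (v s)) :
    (List.ofFn fun r => v r * p r * w r).prod =
      (List.ofFn v).prod * (List.ofFn p).prod * (List.ofFn w).reverse.prod := by
  induction l with
  | zero => simp
  | succ l ih =>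
    have ih' := ih (fun r => v r.succ) (fun r => p r.succ) (fun r => w r.succ)
      (fun r s h => hw _ _ (Fin.succ_lt_succ_iff.mpr h))
      (fun r s h => hp _ _ (Fin.succ_lt_succ_iff.mpr h))
    have hw0 : Commute (w 0) (List.ofFn fun r : Fin l => v r.succ * p r.succ * w r.succ).prod :=
      Commute.list_prod_right _ _ <| by
        simpa [List.mem_ofFn] using fun s => hw 0 s.succ (Fin.succ_pos s)
    have hp0 : Commute (p 0) (List.ofFn fun r : Fin l => v r.succ).prod :=
      Commute.list_prod_right _ _ <| by
        simpa [List.mem_ofFn] using fun s => hp 0 s.succ (Fin.succ_pos s)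
    rw [ih'] at hw0
    simp only [List.ofFn_succ, List.prod_cons, List.reverse_cons, List.prod_append,
      List.prod_nil, mul_one, ih']
    calc v 0 * p 0 * w 0 * (_ * _ * _) = v 0 * (p 0 * (List.ofFn fun r : Fin l => v r.succ).prod) *
          (List.ofFn fun r : Fin l => p r.succ).prod *
          ((List.ofFn fun r : Fin l => w r.succ).reverse.prod * w 0) := by
          rw [mul_assoc _ (w 0), hw0.eq]; simp only [mul_assoc]
      _ = _ := by rw [hp0.eq]; simp only [mul_assoc]

theorem List.prod_ofFn_mul_of_commute {M : Type*} [Monoid M] {l : ℕ} (v w : Fin l → M)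
    (hw : ∀ r s, r < s → Commute (w r) (v s * w s)) :
    (List.ofFn fun r => v r * w r).prod = (List.ofFn v).prod * (List.ofFn w).reverse.prod := by
  simpa using List.prod_ofFn_mul_mul_of_commute v (fun _ => 1) w (by simpa using hw)
    (fun _ _ _ => Commute.one_left _)

section TwistedCommutation

variable {𝕜 R : Type*} [CommSemiring 𝕜] [Semiring R] [Algebra 𝕜 R] {a b c d : R} {s t : 𝕜}

theorem mul_pow_eq_smul_pow_mul (h : a * b = s • (b * a)) (m : ℕ) :
    a * b ^ m = s ^ m • (b ^ m * a) := by
  induction m with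
  | zero => simp
  | succ m ih =>
    rw [pow_succ, ← mul_assoc, ih, smul_mul_assoc, mul_assoc, h, mul_smul_comm, smul_smul,
      pow_succ, mul_assoc]

theorem commute_pow_mul_mul_pow (hst : s * t = 1) (hb : a * b = s • (b * a))
    (hd : a * d = t • (d * a)) (hc : Commute a c) (m : ℕ) : Commute a (b ^ m * c * d ^ m) := by
  calc a * (b ^ m * c * d ^ m) = s ^ m • (b ^ m * (a * c) * d ^ m) := by
        rw [← mul_assoc, ← mul_assoc, mul_pow_eq_smul_pow_mul hb, smul_mul_assoc, smul_mul_assoc,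
          mul_assoc _ a]
    _ = s ^ m • (b ^ m * c * (a * d ^ m)) := by rw [hc.eq]; simp only [mul_assoc]
    _ = b ^ m * c * d ^ m * a := by
        rw [mul_pow_eq_smul_pow_mul hd, mul_smul_comm, smul_smul, ← mul_pow, hst, one_pow,
          one_smul]
        simp only [mul_assoc]

theorem commute_mul_of_mul_eq_smul_mul (hst : s * t = 1) (hb : a * b = s • (b * a))
    (hd : a * d = t • (d * a)) : Commute a (b * d) := by
  simpa using commute_pow_mul_mul_pow hst hb hd (Commute.one_right a) 1

end TwistedCommutation

theorem Complex.conj_mul_self_of_norm_eq_one {w : ℂ} (hw : ‖w‖ = 1) : starRingEnd ℂ w * w = 1 := by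
  rw [Complex.conj_mul', hw]; simp

theorem eq_smul_of_star_mul_eq_smul_one {A : Type*} [NormedRing A] [StarRing A] [CStarRing A]
    [Algebra ℂ A] [StarModule ℂ A] {a b : A} (ha : star a * a = 1) (hb : star b * b = 1)
    {c : ℂ} (hc : ‖c‖ = 1) (hba : star b * a = c • 1) : a = c • b := by
  have hab : star a * b = star c • 1 := by
    simpa [star_mul] using congrArg star hba
  have hcc : starRingEnd ℂ c * c = 1 := Complex.conj_mul_self_of_norm_eq_one hc
  rw [← sub_eq_zero, ← CStarRing.star_mul_self_eq_zero_iff]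
  simp [sub_mul, mul_sub, smul_smul, ha, hb, hab, hba, hcc]

namespace DoublyNonCommuting

variable {n : ℕ} {z : Fin n → Fin n → ℂ} {V : Fin n → H →L[ℂ] H} {i j : Fin n}

theorem mul_adjoint_eq_smul (hV : DoublyNonCommuting z V) (hz1 : ∀ i j, i ≠ j → ‖z i j‖ = 1)
    (hij : i ≠ j) : V j * adjoint (V i) = z i j • (adjoint (V i) * V j) := by
  rw [hV.2 i j hij, smul_smul, mul_comm, Complex.conj_mul_self_of_norm_eq_one (hz1 i j hij),
    one_smul]

theorem mul_eq_smul_mul (hV : DoublyNonCommuting z V) (hz1 : ∀ i j, i ≠ j → ‖z i j‖ = 1)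
    (hz2 : ∀ i j, i ≠ j → z j i = starRingEnd ℂ (z i j)) (hij : i ≠ j) :
    V i * V j = z i j • (V j * V i) := by
  have hiso {a b : Fin n} : star (V a * V b) * (V a * V b) = 1 := by
    rw [star_mul, star_eq_adjoint, star_eq_adjoint, mul_assoc, ← mul_assoc (adjoint (V a)),
      hV.1, one_mul, hV.1]
  refine eq_smul_of_star_mul_eq_smul_one hiso hiso (hz1 i j hij) ?_
  rw [star_mul, star_eq_adjoint, star_eq_adjoint, mul_assoc, ← mul_assoc (adjoint (V j)),
    hV.2 j i hij.symm, hz2 i j hij, Complex.conj_conj, smul_mul_assoc, mul_smul_comm,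
    mul_assoc, hV.1, mul_one, hV.1]

theorem adjoint_mul_adjoint_eq_smul (hV : DoublyNonCommuting z V)
    (hz1 : ∀ i j, i ≠ j → ‖z i j‖ = 1) (hz2 : ∀ i j, i ≠ j → z j i = starRingEnd ℂ (z i j))
    (hij : i ≠ j) : adjoint (V i) * adjoint (V j) = z i j • (adjoint (V j) * adjoint (V i)) := by
  simpa [star_mul, star_eq_adjoint, hz2 i j hij] using
    congrArg star (hV.mul_eq_smul_mul hz1 hz2 hij.symm)

theorem commute_adjoint_pow_mul_mul_adjoint_pow (hV : DoublyNonCommuting z V)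
    (hz1 : ∀ i j, i ≠ j → ‖z i j‖ = 1) (hz2 : ∀ i j, i ≠ j → z j i = starRingEnd ℂ (z i j))
    (hij : i ≠ j) {c : H →L[ℂ] H} (hc : Commute (adjoint (V i)) c) (m : ℕ) :
    Commute (adjoint (V i)) (V j ^ m * c * adjoint (V j) ^ m) :=
  commute_pow_mul_mul_pow (Complex.conj_mul_self_of_norm_eq_one (hz1 i j hij)) (hV.2 i j hij)
    (hV.adjoint_mul_adjoint_eq_smul hz1 hz2 hij) hc m

theorem commute_adjoint_mul_self_adjoint (hV : DoublyNonCommuting z V)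
    (hz1 : ∀ i j, i ≠ j → ‖z i j‖ = 1) (hz2 : ∀ i j, i ≠ j → z j i = starRingEnd ℂ (z i j))
    (hij : i ≠ j) : Commute (adjoint (V i)) (V j * adjoint (V j)) :=
  commute_mul_of_mul_eq_smul_mul (Complex.conj_mul_self_of_norm_eq_one (hz1 i j hij))
    (hV.2 i j hij) (hV.adjoint_mul_adjoint_eq_smul hz1 hz2 hij)

theorem commute_mul_self_adjoint (hV : DoublyNonCommuting z V)
    (hz1 : ∀ i j, i ≠ j → ‖z i j‖ = 1) (hz2 : ∀ i j, i ≠ j → z j i = starRingEnd ℂ (z i j))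
    (hij : i ≠ j) : Commute (V j) (V i * adjoint (V i)) := by
  refine commute_mul_of_mul_eq_smul_mul ?_ (hV.mul_eq_smul_mul hz1 hz2 hij.symm)
    (hV.mul_adjoint_eq_smul hz1 hij)
  rw [hz2 i j hij, Complex.conj_mul_self_of_norm_eq_one (hz1 i j hij)]

end DoublyNonCommuting

theorem statement10_general {n : ℕ} (z : Fin n → Fin n → ℂ)
    (hz1 : ∀ i j, i ≠ j → ‖z i j‖ = 1)
    (hz2 : ∀ i j, i ≠ j → z j i = (starRingEnd ℂ) (z i j))
    (V : Fin n → H →L[ℂ] H) (hV : DoublyNonCommuting z V)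
    (l : ℕ) (ι : Fin l → Fin n) (hι : Function.Injective ι) (k : Fin l → ℕ) :
    (List.ofFn fun r =>
        V (ι r) ^ k r * (1 - V (ι r) * adjoint (V (ι r))) * adjoint (V (ι r)) ^ k r).prod =
      (List.ofFn fun r => V (ι r) ^ k r).prod *
        (List.ofFn fun r => 1 - V (ι r) * adjoint (V (ι r))).prod *
        ((List.ofFn fun r => adjoint (V (ι r)) ^ k r).reverse).prod ∧
    (List.ofFn fun r => V (ι r) ^ k r * adjoint (V (ι r)) ^ k r).prod =
      (List.ofFn fun r => V (ι r) ^ k r).prod *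
        ((List.ofFn fun r => adjoint (V (ι r)) ^ k r).reverse).prod := by
  have hne {r s : Fin l} (h : r < s) : ι r ≠ ι s := hι.ne h.ne
  refine ⟨List.prod_ofFn_mul_mul_of_commute _ _ _ (fun r s h => ?_) (fun r s h => ?_),
    List.prod_ofFn_mul_of_commute _ _ (fun r s h => ?_)⟩
  · have hc := (Commute.one_right _).sub_right
      (hV.commute_adjoint_mul_self_adjoint hz1 hz2 (hne h))
    exact (hV.commute_adjoint_pow_mul_mul_adjoint_pow hz1 hz2 (hne h) hc _).pow_left _
  · exact ((Commute.one_left _).sub_left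
      (hV.commute_mul_self_adjoint hz1 hz2 (hne h)).symm).pow_right _
  · simpa using (hV.commute_adjoint_pow_mul_mul_adjoint_pow hz1 hz2 (hne h)
      (Commute.one_right _) (k s)).pow_left (k r)

theorem statement10 {n : ℕ} (hn : 1 ≤ n) (z : Fin n → Fin n → ℂ)
    (hz1 : ∀ i j, i ≠ j → ‖z i j‖ = 1)
    (hz2 : ∀ i j, i ≠ j → z j i = (starRingEnd ℂ) (z i j))
    (V : Fin n → H →L[ℂ] H) (hV : DoublyNonCommuting z V)
    (l : ℕ) (ι : Fin l → Fin n) (hι : Function.Injective ι) (k : Fin l → ℕ) :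
    (List.ofFn fun r =>
        V (ι r) ^ k r * (1 - V (ι r) * adjoint (V (ι r))) * adjoint (V (ι r)) ^ k r).prod =
      (List.ofFn fun r => V (ι r) ^ k r).prod *
        (List.ofFn fun r => 1 - V (ι r) * adjoint (V (ι r))).prod *
        ((List.ofFn fun r => adjoint (V (ι r)) ^ k r).reverse).prod ∧
    (List.ofFn fun r => V (ι r) ^ k r * adjoint (V (ι r)) ^ k r).prod =
      (List.ofFn fun r => V (ι r) ^ k r).prod *
        ((List.ofFn fun r => adjoint (V (ι r)) ^ k r).reverse).prod :=
  statement10_general z hz1 hz2 V hV l ι hι k
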